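/- For all real Y₂, Z, setting Z̃ = −Z and Ỹ₂ = Y₂ + log(1+e^{2Z}), the identity X_{Y₂} · L · X_Z · F · X_Z · R · X_{Y₂} = X_{Ỹ₂} · R · X_{Z̃} · F · X_{Z̃} · L · X_{Ỹ₂} holds. -/

import Mathlib

/-! Writing `Xm Z` as `!![0, -a; a⁻¹, 0]` with `a = exp (Z / 2)`, the sandwich `X_a F X_b` collapses
to `X_{ab}`, so both sides reduce to products `X_p L X_s R X_p` and `X_P R X_t L X_P` with explicit
closed forms. With `q = exp (Z / 2)`, `s = q²`, `t = q⁻²` and `P = p c`, these agree exactly when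
`c² = 1 + q⁴`, which is what the shift `Ỹ₂ = Y₂ + log (1 + e^{2Z})` provides. -/

open Matrix Real

noncomputable def Xm (Z : ℝ) : Matrix (Fin 2) (Fin 2) ℝ :=
  !![0, -Real.exp (Z / 2); Real.exp (-Z / 2), 0]

def Fm : Matrix (Fin 2) (Fin 2) ℝ := !![0, 1; -1, 0]
def Rm : Matrix (Fin 2) (Fin 2) ℝ := !![1, 1; -1, 0]
def Lm : Matrix (Fin 2) (Fin 2) ℝ := !![0, 1; -1, -1]

noncomputable def antidiagInv (a : ℝ) : Matrix (Fin 2) (Fin 2) ℝ := !![0, -a; a⁻¹, 0]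

theorem Xm_eq_antidiagInv (Z : ℝ) : Xm Z = antidiagInv (exp (Z / 2)) := by
  rw [Xm, antidiagInv, neg_div, Real.exp_neg]

theorem antidiagInv_mul_Fm_mul_antidiagInv (a b : ℝ) :
    antidiagInv a * Fm * antidiagInv b = antidiagInv (a * b) := by
  simp only [antidiagInv, Fm, mul_fin_two]
  congr 1
  simp [mul_comm]

theorem antidiagInv_mul_Lm_mul_antidiagInv_mul_Rm_mul_antidiagInv {p s : ℝ} (hp : p ≠ 0)
    (hs : s ≠ 0) :
    antidiagInv p * Lm * antidiagInv s * Rm * antidiagInv p =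
      !![s⁻¹, -p ^ 2 * (s⁻¹ + s); (p ^ 2 * s)⁻¹, -s⁻¹] := by
  simp only [antidiagInv, Lm, Rm, mul_fin_two]
  ext i j
  fin_cases i <;> fin_cases j <;> simp <;> field_simp

theorem antidiagInv_mul_Rm_mul_antidiagInv_mul_Lm_mul_antidiagInv {P t : ℝ} (hP : P ≠ 0)
    (ht : t ≠ 0) :
    antidiagInv P * Rm * antidiagInv t * Lm * antidiagInv P =
      !![t, -P ^ 2 * t; (t⁻¹ + t) / P ^ 2, -t] := by
  simp only [antidiagInv, Lm, Rm, mul_fin_two]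
  ext i j
  fin_cases i <;> fin_cases j <;> simp <;> field_simp

theorem antidiagInv_pending_flip {p q c : ℝ} (hp : p ≠ 0) (hq : q ≠ 0) (hc : c ^ 2 = 1 + q ^ 4) :
    antidiagInv p * Lm * antidiagInv q * Fm * antidiagInv q * Rm * antidiagInv p =
      antidiagInv (p * c) * Rm * antidiagInv q⁻¹ * Fm * antidiagInv q⁻¹ * Lm *
        antidiagInv (p * c) := by
  have hc0 : c ≠ 0 := by
    rintro rfl
    nlinarith [pow_two_nonneg (q ^ 2)]
  have collapse_sandwich : ∀ A B C : Matrix (Fin 2) (Fin 2) ℝ, ∀ a,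
      A * B * antidiagInv a * Fm * antidiagInv a * C * A =
        A * B * antidiagInv (a * a) * C * A := by
    intro A B C a
    rw [← antidiagInv_mul_Fm_mul_antidiagInv]
    simp only [Matrix.mul_assoc]
  rw [collapse_sandwich, collapse_sandwich,
    antidiagInv_mul_Lm_mul_antidiagInv_mul_Rm_mul_antidiagInv hp (mul_ne_zero hq hq),
    antidiagInv_mul_Rm_mul_antidiagInv_mul_Lm_mul_antidiagInv (mul_ne_zero hp hc0)
      (mul_ne_zero (inv_ne_zero hq) (inv_ne_zero hq))]
  ext i j
  fin_cases i <;> fin_cases j <;> simp <;> field_simp <;> linarith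

theorem pending_flip_identity_4 (Y₂ Z : ℝ) :
    Xm Y₂ * Lm * Xm Z * Fm * Xm Z * Rm * Xm Y₂ =
      Xm (Y₂ + Real.log (1 + Real.exp (2 * Z))) * Rm * Xm (-Z) * Fm * Xm (-Z) * Lm *
        Xm (Y₂ + Real.log (1 + Real.exp (2 * Z))) := by
  have hc : exp (log (1 + exp (2 * Z)) / 2) ^ 2 = 1 + exp (Z / 2) ^ 4 := by
    rw [← exp_nat_mul, ← exp_nat_mul]
    push_cast
    rw [mul_div_cancel₀ _ two_ne_zero, exp_log (by positivity)]
    ring_nf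
  simp only [Xm_eq_antidiagInv, add_div, exp_add, neg_div, Real.exp_neg]
  exact antidiagInv_pending_flip (exp_ne_zero _) (exp_ne_zero _) hc
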